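/- arXiv:1005.5543 — 4 statements merged into one kernel-verified Lean document; each statement's English description precedes it below -/
import Mathlib

section
/- Let R be a finite relation over attributes I ∪ O satisfying the functional dependency I → O, let V ⊆ I ∪ O be visible attributes, and let x ∈ π_I(R). If y ∈ Out_{x}(V) (y is a possible output for x over Worlds(R, V)), then there exist x' ∈ π_I(R) and y' with y' being the output of x' in R (i.e., some tuple t ∈ R has π_I(t) = x' and π_O(t) = y'), such that π_{V∩I}(x) = π_{V∩I}(x') and π_{V∩O}(y) = π_{V∩O}(y'). -/
/-- Tuples `t` and `t'` agree on the attributes in `S`. -/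
def Agrees {ι Val : Type*} (S : Set ι) (t t' : ι → Val) : Prop := ∀ a ∈ S, t a = t' a

/-- The relation `R` satisfies the functional dependency `I → O`. -/
def SatFD {ι Val : Type*} (I O : Set ι) (R : Set (ι → Val)) : Prop :=
  ∀ t ∈ R, ∀ t' ∈ R, Agrees I t t' → Agrees O t t'

/-- The projections of `R` and `R'` on the attributes `V` coincide. -/
def ProjEq {ι Val : Type*} (V : Set ι) (R R' : Set (ι → Val)) : Prop :=
  (∀ t ∈ R, ∃ t' ∈ R', Agrees V t t') ∧ (∀ t' ∈ R', ∃ t ∈ R, Agrees V t t')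

/-- Possible worlds of `R` w.r.t. visible attributes `V`. -/
def Worlds {ι Val : Type*} (I O V : Set ι) (R : Set (ι → Val)) : Set (Set (ι → Val)) :=
  {R' | SatFD I O R' ∧ ProjEq V R R'}

/-- Possible outputs of input tuple `x` over the possible worlds of `R` w.r.t. `V`. -/
def Out {ι Val : Type*} (I O V : Set ι) (R : Set (ι → Val)) (x : ι → Val) : Set (ι → Val) :=
  {y | ∃ R' ∈ Worlds I O V R, ∃ t' ∈ R', Agrees I t' x ∧ Agrees O t' y}

namespace Agrees

variable {ι Val : Type*} {S T : Set ι} {t t' t'' : ι → Val}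

theorem symm (h : Agrees S t t') : Agrees S t' t := fun a ha => (h a ha).symm

theorem trans (h : Agrees S t t') (h' : Agrees S t' t'') : Agrees S t t'' :=
  fun a ha => (h a ha).trans (h' a ha)

theorem mono (h : Agrees S t t') (hTS : T ⊆ S) : Agrees T t t' := fun a ha => h a (hTS ha)

end Agrees

theorem ProjEq.exists_agrees_of_mem_right {ι Val : Type*} {V : Set ι} {R R' : Set (ι → Val)}
    (h : ProjEq V R R') {t' : ι → Val} (ht' : t' ∈ R') : ∃ t ∈ R, Agrees V t' t := by
  obtain ⟨t, htR, hV⟩ := h.2 t' ht'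
  exact ⟨t, htR, hV.symm⟩

/-- The tuple of the world that witnesses `y` has the same `V`-projection as a real tuple. -/
theorem exists_mem_agrees_of_mem_Out {ι Val : Type*} {I O V : Set ι} {R : Set (ι → Val)}
    {x y : ι → Val} (hy : y ∈ Out I O V R x) :
    ∃ t ∈ R, Agrees (V ∩ I) x t ∧ Agrees (V ∩ O) y t := by
  obtain ⟨R', ⟨-, hPE⟩, t', ht'R', hI, hO⟩ := hy
  obtain ⟨t, htR, hV⟩ := hPE.exists_agrees_of_mem_right ht'R'
  exact ⟨t, htR, (hI.symm.mono Set.inter_subset_right).trans (hV.mono Set.inter_subset_left),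
    (hO.symm.mono Set.inter_subset_right).trans (hV.mono Set.inter_subset_left)⟩

theorem stmt_4_general {ι Val : Type*}
    (I O V : Set ι) (R : Set (ι → Val))
    (x y : ι → Val) (hy : y ∈ Out I O V R x) :
    ∃ x' y' : ι → Val, (∃ t ∈ R, Agrees I t x' ∧ Agrees O t y') ∧
      Agrees (V ∩ I) x x' ∧ Agrees (V ∩ O) y y' := by
  obtain ⟨t, htR, hxt, hyt⟩ := exists_mem_agrees_of_mem_Out hy
  -- a full tuple of `R` serves as its own input and output
  exact ⟨t, t, ⟨t, htR, fun _ _ => rfl, fun _ _ => rfl⟩, hxt, hyt⟩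

/-- If `y ∈ Out_x(V)` then there exist a real input `x'` of `R` with real output `y'`
such that `x` and `x'` agree on `V ∩ I`, and `y` and `y'` agree on `V ∩ O`. -/
theorem stmt_4 {ι Val : Type*} [Finite ι] [Finite Val]
    (I O V : Set ι) (R : Set (ι → Val)) (hRfin : R.Finite)
    (hdisj : I ∩ O = ∅) (hFD : SatFD I O R)
    (x y : ι → Val) (hx : ∃ t ∈ R, Agrees I t x) (hy : y ∈ Out I O V R x) :
    ∃ x' y' : ι → Val, (∃ t ∈ R, Agrees I t x' ∧ Agrees O t y') ∧
      Agrees (V ∩ I) x x' ∧ Agrees (V ∩ O) y y' :=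
  stmt_4_general I O V R x y hy
end

section
/- Consider a chain workflow of two bijective modules m1, m2 on k boolean inputs/outputs, where m1 is a bijection from {0,1}^k to {0,1}^k. Fix a set V1 of visible output attributes of m1 with |complement of V1| = log2(Γ), Γ a power of 2 with 2 ≤ Γ ≤ 2^k. The number of standalone possible worlds of m1 (all functions from {0,1}^k to {0,1}^k agreeing with m1 on the visible bits) is Γ^(2^k), while the number of such functions that are additionally bijections is (Γ!)^(2^k / Γ). -/
/-!
Restricting outputs to the visible coordinates `V1` partitions `{0,1}^k` into `2^|V1|` fibers of
size `Γ`. A possible world chooses, independently for each input `x`, an output in the fiber of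
`m1 x`, whence `Γ^(2^k)`. A bijective possible world `f` is the same as the permutation
`f ∘ m1⁻¹`, which preserves every fiber, so these are counted by the stabilizer of the
restriction map in the permutation group: `(Γ!)` per fiber.
-/

open Equiv Function Nat

section PossibleWorlds

variable {α β γ : Type*}

theorem Nat.card_fiberwise_funs [Fintype α] (v : β → γ) (m : α → β) :
    Nat.card {f : α → β // ∀ x, v (f x) = v (m x)} =
      ∏ x, Nat.card {b // v b = v (m x)} := by
  rw [Nat.card_congr (subtypePiEquivPi (p := fun x b => v b = v (m x))), Nat.card_pi]

noncomputable def bijectiveFiberwiseEquivPerm (v : β → γ) {m : α → β} (hm : Bijective m) :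
    {f : α → β // (∀ x, v (f x) = v (m x)) ∧ Bijective f} ≃ {σ : Perm β // v ∘ σ = v} where
  toFun f := ⟨(ofBijective m hm).symm.trans (ofBijective f.1 f.2.2), by
    funext y
    simpa [ofBijective_apply_symm_apply] using f.2.1 ((ofBijective m hm).symm y)⟩
  invFun σ := ⟨σ.1 ∘ m, fun x => congrFun σ.2 (m x), σ.1.bijective.comp hm⟩
  left_inv f := by ext x; simp
  right_inv σ := by ext y; simp [ofBijective_apply_symm_apply]

theorem Nat.card_bijective_fiberwise_funs [Fintype β] [DecidableEq β] [Fintype γ]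
    [DecidableEq γ] (v : β → γ) {m : α → β} (hm : Bijective m) :
    Nat.card {f : α → β // (∀ x, v (f x) = v (m x)) ∧ Bijective f} =
      ∏ c, (Nat.card {b // v b = c})! := by
  rw [Nat.card_congr (bijectiveFiberwiseEquivPerm v hm), Nat.card_eq_fintype_card,
    DomMulAct.stabilizer_card]
  simp only [Nat.card_eq_fintype_card]

end PossibleWorlds

theorem Finset.card_fiber_restrict {ι β : Type*} [Fintype ι] [DecidableEq ι] [Fintype β]
    (s : Finset ι) (a : s → β) :
    Nat.card {y : ι → β // s.restrict y = a} = Nat.card β ^ sᶜ.card := by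
  rw [Nat.card_congr ((piEquivPiSubtypeProd (· ∈ s) fun _ => β).subtypeEquiv
      (p := fun y => s.restrict y = a) (q := fun p => p.1 = a) fun _ => Iff.rfl),
    Nat.card_congr (prodSubtypeFstEquivSubtypeProd (p := (· = a)))]
  simp [Nat.card_eq_fintype_card, Fintype.card_subtype_compl, Finset.card_compl]

theorem stmt_8_general (k c Γ : ℕ) (hΓ : Γ = 2 ^ c)
    (V1 : Finset (Fin k)) (hV1 : V1ᶜ.card = c)
    (m1 : (Fin k → Bool) → (Fin k → Bool)) (hm1 : Function.Bijective m1) :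
    Nat.card {f : (Fin k → Bool) → (Fin k → Bool) //
        ∀ x, ∀ i ∈ V1, f x i = m1 x i} = Γ ^ (2 ^ k) ∧
    Nat.card {f : (Fin k → Bool) → (Fin k → Bool) //
        (∀ x, ∀ i ∈ V1, f x i = m1 x i) ∧ Function.Bijective f} =
      (Nat.factorial Γ) ^ (2 ^ k / Γ) := by
  have visible_iff (f : (Fin k → Bool) → (Fin k → Bool)) (x : Fin k → Bool) :
      (∀ i ∈ V1, f x i = m1 x i) ↔ V1.restrict (f x) = V1.restrict (m1 x) := by
    simp [funext_iff]
  have fiber_card (a : V1 → Bool) : Nat.card {y : Fin k → Bool // V1.restrict y = a} = Γ := by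
    rw [Finset.card_fiber_restrict, Nat.card_eq_fintype_card, Fintype.card_bool, hV1, hΓ]
  have num_fibers : 2 ^ k / Γ = Nat.card (V1 → Bool) := by
    have hk : V1.card + c = k := by
      rw [← hV1, Finset.card_add_card_compl, Fintype.card_fin]
    rw [Nat.card_fun, Nat.card_eq_fintype_card, Fintype.card_bool, Nat.card_eq_fintype_card,
      Fintype.card_coe, hΓ]
    exact Nat.div_eq_of_eq_mul_left (by positivity) (by rw [← pow_add, hk])
  constructor
  · simp_rw [visible_iff]
    rw [Nat.card_fiberwise_funs, Finset.prod_congr rfl fun x _ => fiber_card _]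
    simp
  · simp_rw [visible_iff]
    rw [Nat.card_bijective_fiberwise_funs _ hm1,
      Finset.prod_congr rfl fun a _ => congrArg factorial (fiber_card a)]
    simp [num_fibers]

/-- Counting possible worlds for a bijective standalone module `m1` on `k` boolean
inputs/outputs, with visible output attributes `V1` and `|V1ᶜ| = log2 Γ` (`Γ = 2^c`,
`c ≥ 1`): the number of standalone possible worlds (functions agreeing with `m1` on
visible output bits) is `Γ^(2^k)`, while the number of bijective such worlds is
`(Γ!)^(2^k / Γ)`. -/
theorem stmt_8 (k c Γ : ℕ) (hc : 1 ≤ c) (hΓ : Γ = 2 ^ c)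
    (V1 : Finset (Fin k)) (hV1 : V1ᶜ.card = c)
    (m1 : (Fin k → Bool) → (Fin k → Bool)) (hm1 : Function.Bijective m1) :
    Nat.card {f : (Fin k → Bool) → (Fin k → Bool) //
        ∀ x, ∀ i ∈ V1, f x i = m1 x i} = Γ ^ (2 ^ k) ∧
    Nat.card {f : (Fin k → Bool) → (Fin k → Bool) //
        (∀ x, ∀ i ∈ V1, f x i = m1 x i) ∧ Function.Bijective f} =
      (Nat.factorial Γ) ^ (2 ^ k / Γ) :=
  stmt_8_general k c Γ hΓ V1 hV1 m1 hm1
end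

section
/- Greedy analysis for bounded data sharing: Let there be n modules, each module i having a finite nonempty list L_i of candidate subsets of a ground set A with costs c : A → ℝ≥0, and suppose each element of A appears in the candidate subsets of at most γ+1 distinct modules (each data item is input to at most γ modules and output of at most 1). Let OPT be a set S ⊆ A such that for each i some member of L_i is contained in S, minimizing c(S). Then the greedy solution T = ⋃_i B_i, where B_i is a minimum-cost member of L_i, satisfies c(T) ≤ (γ+1) · c(OPT). -/
/-!
Each module's greedy choice `B i` costs at most the cheapest candidate `S i` inside `OPT`.
Summing over modules, the union `⋃ B i` costs at most `∑ c(B i) ≤ ∑ c(S i)`, and in the latter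
sum each element of `OPT` is counted once per module whose candidate contains it, so at most
`γ + 1` times.
-/

open Finset

namespace Finset

variable {ι α M : Type*} [DecidableEq α]

theorem sum_sum_eq_sum_card_nsmul [AddCommMonoid M] (s : Finset ι) (t : ι → Finset α)
    {u : Finset α} (htu : ∀ i ∈ s, t i ⊆ u) (f : α → M) :
    ∑ i ∈ s, ∑ a ∈ t i, f a = ∑ a ∈ u, #{i ∈ s | a ∈ t i} • f a := by
  calc ∑ i ∈ s, ∑ a ∈ t i, f a = ∑ i ∈ s, ∑ a ∈ u, if a ∈ t i then f a else 0 := by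
        refine sum_congr rfl fun i hi => ?_
        rw [sum_ite_mem, inter_eq_right.mpr (htu i hi)]
    _ = ∑ a ∈ u, #{i ∈ s | a ∈ t i} • f a := by
        rw [sum_comm]
        refine sum_congr rfl fun a _ => ?_
        rw [← sum_filter, sum_const]

variable [AddCommMonoid M] [PartialOrder M] [IsOrderedAddMonoid M]

theorem sum_biUnion_le_sum_sum (s : Finset ι) (t : ι → Finset α) {f : α → M}
    (hf : ∀ a ∈ s.biUnion t, 0 ≤ f a) :
    ∑ a ∈ s.biUnion t, f a ≤ ∑ i ∈ s, ∑ a ∈ t i, f a := by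
  rw [sum_sum_eq_sum_card_nsmul s t (fun i hi => subset_biUnion_of_mem t hi)]
  refine sum_le_sum fun a ha => ?_
  obtain ⟨i, hi, hai⟩ := mem_biUnion.mp ha
  have hcard : #{i ∈ s | a ∈ t i} ≠ 0 := (card_pos.mpr ⟨i, mem_filter.mpr ⟨hi, hai⟩⟩).ne'
  exact le_self_nsmul (hf a ha) hcard

theorem sum_sum_le_nsmul_sum_of_card_le (s : Finset ι) (t : ι → Finset α) {u : Finset α}
    (htu : ∀ i ∈ s, t i ⊆ u) {f : α → M} (hf : ∀ a ∈ u, 0 ≤ f a) {k : ℕ}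
    (hk : ∀ a ∈ u, #{i ∈ s | a ∈ t i} ≤ k) :
    ∑ i ∈ s, ∑ a ∈ t i, f a ≤ k • ∑ a ∈ u, f a := by
  rw [sum_sum_eq_sum_card_nsmul s t htu, smul_sum]
  exact sum_le_sum fun a ha => nsmul_le_nsmul_left (hf a ha) (hk a ha)

end Finset

theorem stmt_11_general {A : Type*} [DecidableEq A] (n γ : ℕ)
    (c : A → ℝ) (hc : ∀ a, 0 ≤ c a)
    (L : Fin n → Finset (Finset A))
    (hshare : ∀ a : A,
      (Finset.univ.filter (fun i : Fin n => ∃ S ∈ L i, a ∈ S)).card ≤ γ + 1)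
    (OPT : Finset A) (hOPT : ∀ i, ∃ S ∈ L i, S ⊆ OPT)
    (B : Fin n → Finset A)
    (hBmin : ∀ i, ∀ S ∈ L i, ∑ a ∈ B i, c a ≤ ∑ a ∈ S, c a) :
    ∑ a ∈ Finset.univ.biUnion B, c a ≤ ((γ : ℝ) + 1) * ∑ a ∈ OPT, c a := by
  choose S hSL hSOPT using hOPT
  have hcount (a : A) : #{i | a ∈ S i} ≤ γ + 1 :=
    (card_le_card (monotone_filter_right _ fun i _ hi => ⟨S i, hSL i, hi⟩)).trans (hshare a)
  calc ∑ a ∈ univ.biUnion B, c a ≤ ∑ i, ∑ a ∈ B i, c a :=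
        sum_biUnion_le_sum_sum _ _ fun a _ => hc a
    _ ≤ ∑ i, ∑ a ∈ S i, c a := sum_le_sum fun i _ => hBmin i (S i) (hSL i)
    _ ≤ (γ + 1) • ∑ a ∈ OPT, c a :=
        sum_sum_le_nsmul_sum_of_card_le _ _ (fun i _ => hSOPT i) (fun a _ => hc a)
          fun a _ => hcount a
    _ = ((γ : ℝ) + 1) * ∑ a ∈ OPT, c a := by rw [nsmul_eq_mul, Nat.cast_succ]

/-- Greedy analysis for bounded data sharing: if each element of the ground set appears in
the candidate subsets of at most γ+1 modules, `OPT` is any feasible solution, and `B i` is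
a minimum-cost member of each list `L i`, then the greedy solution `T = ⋃ i, B i` has
cost at most `(γ+1)` times the cost of `OPT`. -/
theorem stmt_11 {A : Type*} [Fintype A] [DecidableEq A] (n γ : ℕ)
    (c : A → ℝ) (hc : ∀ a, 0 ≤ c a)
    (L : Fin n → Finset (Finset A)) (hL : ∀ i, (L i).Nonempty)
    (hshare : ∀ a : A,
      (Finset.univ.filter (fun i : Fin n => ∃ S ∈ L i, a ∈ S)).card ≤ γ + 1)
    (OPT : Finset A) (hOPT : ∀ i, ∃ S ∈ L i, S ⊆ OPT)
    (B : Fin n → Finset A) (hB : ∀ i, B i ∈ L i)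
    (hBmin : ∀ i, ∀ S ∈ L i, ∑ a ∈ B i, c a ≤ ∑ a ∈ S, c a) :
    ∑ a ∈ Finset.univ.biUnion B, c a ≤ ((γ : ℝ) + 1) * ∑ a ∈ OPT, c a :=
  stmt_11_general n γ c hc L hshare OPT hOPT B hBmin
end

section
/- LP rounding for set constraints: Suppose nonnegative reals x_b (b ∈ A) and r_{ij} (i ∈ [1,n], j ∈ [1,ℓ_i]) satisfy Σ_{j=1}^{ℓ_i} r_{ij} ≥ 1 for each i, and x_b ≥ r_{ij} for all b in the j-th candidate subset S_{ij} ⊆ A of module i. Let ℓ_max = max_i ℓ_i and define V̄ = { b ∈ A : x_b ≥ 1/ℓ_max }. Then (a) for each i there exists j with S_{ij} ⊆ V̄, and (b) Σ_{b∈V̄} c_b ≤ ℓ_max · Σ_{b∈A} c_b x_b for any nonnegative costs c. -/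
/-!
By pigeonhole some `r i j` is at least `1 / ℓ i ≥ 1 / lmax`, and the constraint `r i j ≤ x b`
puts all of `S i j` above the threshold. The cost bound is Markov's inequality for the weights
`c` at threshold `1 / lmax`.
-/

open scoped Classical

open Finset in
theorem exists_one_div_le_of_one_le_sum {ι : Type*} [Fintype ι] {m : ℕ} (r : ι → ℝ)
    (hcard : Fintype.card ι ≤ m) (hsum : 1 ≤ ∑ j, r j) : ∃ j, 1 / (m : ℝ) ≤ r j := by
  by_contra! hlt
  have hne : (univ : Finset ι).Nonempty := nonempty_of_sum_ne_zero (f := r) (by linarith)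
  have hlt_sum : ∑ j, r j < ∑ _j : ι, 1 / (m : ℝ) := sum_lt_sum_of_nonempty hne fun j _ => hlt j
  have hconst : ∑ _j : ι, 1 / (m : ℝ) ≤ 1 := by
    rw [sum_const, card_univ, nsmul_eq_mul, mul_one_div]
    exact div_le_one_of_le₀ (by exact_mod_cast hcard) m.cast_nonneg
  linarith

theorem Finset.sum_filter_le_inv_mul_sum_mul {α : Type*} (s : Finset α) {c x : α → ℝ}
    (hc : ∀ b ∈ s, 0 ≤ c b) (hx : ∀ b ∈ s, 0 ≤ x b) {t : ℝ} (ht : 0 < t) :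
    ∑ b ∈ s.filter (fun b => t ≤ x b), c b ≤ t⁻¹ * ∑ b ∈ s, c b * x b := by
  rw [le_inv_mul_iff₀' ht, Finset.sum_mul]
  calc ∑ b ∈ s.filter (fun b => t ≤ x b), c b * t
      ≤ ∑ b ∈ s.filter (fun b => t ≤ x b), c b * x b := by
        refine Finset.sum_le_sum fun b hb => ?_
        rw [Finset.mem_filter] at hb
        exact mul_le_mul_of_nonneg_left hb.2 (hc b hb.1)
    _ ≤ ∑ b ∈ s, c b * x b :=
        Finset.sum_le_sum_of_subset_of_nonneg (Finset.filter_subset _ _)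
          fun b hb _ => mul_nonneg (hc b hb) (hx b hb)

theorem stmt_12_general {A : Type*} [Fintype A] (n lmax : ℕ)
    (ℓ : Fin n → ℕ) (hℓ : ∀ i, ℓ i ≤ lmax) (hlmax : 0 < lmax)
    (S : (i : Fin n) → Fin (ℓ i) → Finset A)
    (x : A → ℝ) (hx : ∀ b, 0 ≤ x b)
    (r : (i : Fin n) → Fin (ℓ i) → ℝ)
    (hcov : ∀ i, 1 ≤ ∑ j, r i j)
    (hxr : ∀ i j, ∀ b ∈ S i j, r i j ≤ x b)
    (c : A → ℝ) (hcnn : ∀ b, 0 ≤ c b) :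
    (∀ i, ∃ j, S i j ⊆ Finset.univ.filter (fun b => (1 : ℝ) / lmax ≤ x b)) ∧
    ∑ b ∈ Finset.univ.filter (fun b => (1 : ℝ) / lmax ≤ x b), c b ≤
      (lmax : ℝ) * ∑ b, c b * x b := by
  constructor
  · intro i
    obtain ⟨j, hj⟩ :=
      exists_one_div_le_of_one_le_sum (r i) (by simpa using hℓ i) (hcov i)
    exact ⟨j, fun b hb => Finset.mem_filter.2 ⟨Finset.mem_univ b, hj.trans (hxr i j b hb)⟩⟩
  · simpa using Finset.univ.sum_filter_le_inv_mul_sum_mul (fun b _ => hcnn b) (fun b _ => hx b)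
      (one_div_pos.2 (Nat.cast_pos.2 hlmax))

/-- LP rounding for set constraints: given a feasible fractional solution
(`∑ j r i j ≥ 1` and `x b ≥ r i j` for `b ∈ S i j`), the rounded set
`V̄ = {b : x b ≥ 1/ℓmax}` contains some candidate subset of every module, and its
cost is at most `ℓmax` times the fractional cost. -/
theorem stmt_12 {A : Type*} [Fintype A] (n lmax : ℕ)
    (ℓ : Fin n → ℕ) (hℓ : ∀ i, ℓ i ≤ lmax) (hlmax : 0 < lmax)
    (S : (i : Fin n) → Fin (ℓ i) → Finset A)
    (x : A → ℝ) (hx : ∀ b, 0 ≤ x b)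
    (r : (i : Fin n) → Fin (ℓ i) → ℝ) (hr : ∀ i j, 0 ≤ r i j)
    (hcov : ∀ i, 1 ≤ ∑ j, r i j)
    (hxr : ∀ i j, ∀ b ∈ S i j, r i j ≤ x b)
    (c : A → ℝ) (hcnn : ∀ b, 0 ≤ c b) :
    (∀ i, ∃ j, S i j ⊆ Finset.univ.filter (fun b => (1 : ℝ) / lmax ≤ x b)) ∧
    ∑ b ∈ Finset.univ.filter (fun b => (1 : ℝ) / lmax ≤ x b), c b ≤
      (lmax : ℝ) * ∑ b, c b * x b :=
  stmt_12_general n lmax ℓ hℓ hlmax S x hx r hcov hxr c hcnn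
end
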